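/- arXiv:1809.04442 — 2 statements merged into one kernel-verified Lean document; each statement's English description precedes it below -/
import Mathlib

section
/- Let μ > 0 and η, α ∈ ℝ, let F̄(x, y) = (μx − ηy − (x² + y²)(x − αy), μy + ηx − (x² + y²)(y + αx)), ω = η − αμ, Φ(θ) = (√μ·cos θ, √μ·sin θ), and define R(θ) = (1/√μ)·(−sin θ − α cos θ, cos θ − α sin θ). Then: (i) ⟨R(θ), Φ′(θ)⟩ = 1 for all θ (normalization of the phase resetting curve); and (ii) R satisfies the adjoint equation ω·R′(θ) = −J̄(θ)ᵀ R(θ) for all θ, where J̄(θ) is the Jacobian matrix of F̄ evaluated at Φ(θ). -/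
open scoped RealInnerProductSpace

/-!
With `J` the quarter turn `(x, y) ↦ (-y, x)`, the field is `F̄ v = (μ + ηJ) v - ‖v‖² (1 + αJ) v`,
and with `e θ = cos θ e₀ + sin θ J e₀` we have `Φ = √μ e` and `R = (J e - α e) / √μ`.
Since `J² = -1` and `Jᵀ = -J`, both curves satisfy `Φ' = J Φ` and `R' = J R`, and the normalization
reduces to `⟪J e - α e, J e⟫ = 1`. Differentiating the cubic term gives
`DF̄(p)ᵀ r = (μ - ‖p‖²) r - (η - α‖p‖²) J r - 2⟪p + α J p, r⟫ p`; on the cycle `‖p‖² = μ` and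
`p + α J p ⟂ R`, so `DF̄ᵀ R = -ω J R = -ω R'`.
-/

section CubicField

variable {E : Type*} [NormedAddCommGroup E] [InnerProductSpace ℝ E]

def cubicField (A B : E →L[ℝ] E) (v : E) : E := A v - ‖v‖ ^ 2 • B v

theorem hasFDerivAt_cubicField (A B : E →L[ℝ] E) (p : E) :
    HasFDerivAt (cubicField A B)
      (A - ‖p‖ ^ 2 • B - (2 • innerSL ℝ p).smulRight (B p)) p :=
  (A.hasFDerivAt.sub ((hasFDerivAt_id p).norm_sq.smul B.hasFDerivAt)).congr_fderiv
    (by simp [sub_sub])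

theorem adjoint_fderiv_cubicField_apply [CompleteSpace E] (A B : E →L[ℝ] E) (p r : E) :
    (fderiv ℝ (cubicField A B) p).adjoint r =
      A.adjoint r - ‖p‖ ^ 2 • B.adjoint r - (2 * ⟪B p, r⟫) • p := by
  rw [(hasFDerivAt_cubicField A B p).fderiv]
  refine ext_inner_right ℝ fun h => ?_
  simp only [ContinuousLinearMap.adjoint_inner_left, inner_sub_left, inner_sub_right,
    inner_smul_left, real_inner_smul_right, sub_apply, smul_apply,
    ContinuousLinearMap.smulRight_apply, innerSL_apply_apply, RCLike.conj_to_real, real_inner_comm]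
  ring

end CubicField

noncomputable section ComplexStructure

variable {E : Type*} [NormedAddCommGroup E] [InnerProductSpace ℝ E] (J : E →L[ℝ] E)

def rot (θ : ℝ) (u : E) : E := Real.cos θ • u + Real.sin θ • J u

def radialField (μ η α : ℝ) : E → E := cubicField (μ • 1 + η • J) (1 + α • J)

def limitCycle (μ : ℝ) (u : E) (θ : ℝ) : E := √μ • rot J θ u

def prc (μ α : ℝ) (u : E) (θ : ℝ) : E := (√μ)⁻¹ • (J (rot J θ u) - α • rot J θ u)

variable {J}

theorem hasDerivAt_rot (hJJ : ∀ x, J (J x) = -x) (u : E) (θ : ℝ) :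
    HasDerivAt (fun θ => rot J θ u) (J (rot J θ u)) θ := by
  refine (((Real.hasDerivAt_cos θ).smul_const u).add
    ((Real.hasDerivAt_sin θ).smul_const (J u))).congr_deriv ?_
  simp only [rot, map_add, map_smul, hJJ]
  module

theorem hasDerivAt_limitCycle (hJJ : ∀ x, J (J x) = -x) (μ : ℝ) (u : E) (θ : ℝ) :
    HasDerivAt (limitCycle J μ u) (J (limitCycle J μ u θ)) θ :=
  ((hasDerivAt_rot hJJ u θ).const_smul √μ).congr_deriv (by simp [limitCycle])

theorem hasDerivAt_prc (hJJ : ∀ x, J (J x) = -x) (μ α : ℝ) (u : E) (θ : ℝ) :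
    HasDerivAt (prc J μ α u) (J (prc J μ α u θ)) θ := by
  have h := hasDerivAt_rot hJJ u θ
  exact (((J.hasFDerivAt.comp_hasDerivAt θ h).sub (h.const_smul α)).const_smul
    (√μ)⁻¹).congr_deriv (by simp [prc])

section Skew

variable (hJ : ∀ x y, ⟪J x, y⟫ = -⟪x, J y⟫)
include hJ

theorem inner_apply_self_of_skew (x : E) : ⟪J x, x⟫ = 0 := by
  have h := hJ x x
  rw [real_inner_comm (J x) x] at h
  linarith

theorem inner_self_apply_of_skew (x : E) : ⟪x, J x⟫ = 0 := by
  rw [real_inner_comm]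
  exact inner_apply_self_of_skew hJ x

theorem inner_apply_apply_of_skew (hJJ : ∀ x, J (J x) = -x) (x y : E) :
    ⟪J x, J y⟫ = ⟪x, y⟫ := by
  rw [hJ, hJJ, inner_neg_right, neg_neg]

theorem adjoint_eq_neg_of_skew [CompleteSpace E] : J.adjoint = -J :=
  (ContinuousLinearMap.eq_adjoint_iff _ _).2 (fun x y => by simp [hJ]) |>.symm

theorem adjoint_fderiv_radialField_apply [CompleteSpace E] (μ η α : ℝ) (p r : E) :
    (fderiv ℝ (radialField J μ η α) p).adjoint r =
      (μ - ‖p‖ ^ 2) • r - (η - α * ‖p‖ ^ 2) • J r - (2 * ⟪p + α • J p, r⟫) • p := by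
  rw [radialField, adjoint_fderiv_cubicField_apply]
  simp only [map_add, map_smul, ContinuousLinearMap.adjoint_one, adjoint_eq_neg_of_skew hJ,
    add_apply, smul_apply, one_apply_eq_self, neg_apply]
  module

theorem inner_rot_self (hJJ : ∀ x, J (J x) = -x) (θ : ℝ) (u : E) :
    ⟪rot J θ u, rot J θ u⟫ = ⟪u, u⟫ := by
  simp only [rot, inner_add_left, inner_add_right, real_inner_smul_left, real_inner_smul_right,
    inner_apply_self_of_skew hJ, inner_apply_apply_of_skew hJ hJJ, inner_self_apply_of_skew hJ]
  linear_combination ⟪u, u⟫ * Real.cos_sq_add_sin_sq θ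

section LimitCycle

variable (hJJ : ∀ x, J (J x) = -x) {μ : ℝ} (hμ : 0 < μ) {u : E} (hu : ‖u‖ = 1)
include hJJ hu

theorem inner_rot_self_of_norm_eq_one (θ : ℝ) : ⟪rot J θ u, rot J θ u⟫ = 1 := by
  rw [inner_rot_self hJ hJJ, real_inner_self_eq_norm_sq, hu, one_pow]

theorem inner_limitCycle_add_smul_apply_prc (α : ℝ) (θ : ℝ) :
    ⟪limitCycle J μ u θ + α • J (limitCycle J μ u θ), prc J μ α u θ⟫ = 0 := by
  simp only [prc, limitCycle, map_smul, real_inner_smul_left, real_inner_smul_right,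
    inner_add_left, inner_sub_right, inner_apply_apply_of_skew hJ hJJ, inner_self_apply_of_skew hJ,
    inner_apply_self_of_skew hJ, inner_rot_self_of_norm_eq_one hJ hJJ hu]
  ring

include hμ

theorem norm_limitCycle_sq (θ : ℝ) : ‖limitCycle J μ u θ‖ ^ 2 = μ := by
  rw [← real_inner_self_eq_norm_sq, limitCycle, real_inner_smul_left, real_inner_smul_right,
    inner_rot_self_of_norm_eq_one hJ hJJ hu, mul_one, Real.mul_self_sqrt hμ.le]

theorem inner_prc_apply_limitCycle (α : ℝ) (θ : ℝ) :
    ⟪prc J μ α u θ, J (limitCycle J μ u θ)⟫ = 1 := by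
  have hr : √μ ≠ 0 := by positivity
  simp only [prc, limitCycle, map_smul, real_inner_smul_left, real_inner_smul_right,
    inner_sub_left, inner_apply_apply_of_skew hJ hJJ, inner_self_apply_of_skew hJ,
    inner_rot_self_of_norm_eq_one hJ hJJ hu]
  field_simp
  ring

theorem adjoint_fderiv_radialField_limitCycle_prc [CompleteSpace E] (η α θ : ℝ) :
    (fderiv ℝ (radialField J μ η α) (limitCycle J μ u θ)).adjoint (prc J μ α u θ) =
      -(η - α * μ) • J (prc J μ α u θ) := by
  rw [adjoint_fderiv_radialField_apply hJ, norm_limitCycle_sq hJ hJJ hμ hu,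
    inner_limitCycle_add_smul_apply_prc hJ hJJ hu]
  module

theorem radialField_prc [CompleteSpace E] (η α : ℝ) :
    (∀ θ, ⟪prc J μ α u θ, deriv (limitCycle J μ u) θ⟫ = 1) ∧
      ∀ θ, DifferentiableAt ℝ (prc J μ α u) θ ∧
        (η - α * μ) • deriv (prc J μ α u) θ =
          -(fderiv ℝ (radialField J μ η α) (limitCycle J μ u θ)).adjoint (prc J μ α u θ) := by
  refine ⟨fun θ => ?_, fun θ => ⟨(hasDerivAt_prc hJJ μ α u θ).differentiableAt, ?_⟩⟩
  · rw [(hasDerivAt_limitCycle hJJ μ u θ).deriv, inner_prc_apply_limitCycle hJ hJJ hμ hu]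
  · rw [(hasDerivAt_prc hJJ μ α u θ).deriv, adjoint_fderiv_radialField_limitCycle_prc hJ hJJ hμ hu,
      neg_smul, neg_neg]

end LimitCycle

end Skew

end ComplexStructure

noncomputable section QuarterTurn

open EuclideanSpace

def quarterTurn : EuclideanSpace ℝ (Fin 2) →L[ℝ] EuclideanSpace ℝ (Fin 2) :=
  Matrix.toEuclideanCLM (𝕜 := ℝ) !![0, -1; 1, 0]

theorem quarterTurn_apply (v : EuclideanSpace ℝ (Fin 2)) :
    quarterTurn v = WithLp.toLp 2 ![-v 1, v 0] := by
  ext i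
  fin_cases i <;> simp [quarterTurn, Matrix.mulVec, dotProduct, Fin.sum_univ_two]

theorem quarterTurn_quarterTurn (v : EuclideanSpace ℝ (Fin 2)) :
    quarterTurn (quarterTurn v) = -v := by
  ext i
  fin_cases i <;> simp [quarterTurn_apply]

theorem inner_quarterTurn_left (v w : EuclideanSpace ℝ (Fin 2)) :
    ⟪quarterTurn v, w⟫ = -⟪v, quarterTurn w⟫ := by
  simp [quarterTurn_apply, PiLp.inner_apply, Fin.sum_univ_two]

theorem radialField_quarterTurn (μ η α : ℝ) :
    radialField quarterTurn μ η α = fun v =>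
      WithLp.toLp 2 ![μ * v 0 - η * v 1 - (v 0 ^ 2 + v 1 ^ 2) * (v 0 - α * v 1),
        μ * v 1 + η * v 0 - (v 0 ^ 2 + v 1 ^ 2) * (v 1 + α * v 0)] := by
  ext v i
  fin_cases i <;>
    simp [radialField, cubicField, quarterTurn_apply, norm_sq_eq, Fin.sum_univ_two] <;> ring

theorem limitCycle_quarterTurn (μ : ℝ) :
    limitCycle quarterTurn μ (single 0 1) = fun θ =>
      WithLp.toLp 2 ![Real.sqrt μ * Real.cos θ, Real.sqrt μ * Real.sin θ] := by
  ext θ i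
  fin_cases i <;> simp [limitCycle, rot, quarterTurn_apply]

theorem prc_quarterTurn (μ α : ℝ) :
    prc quarterTurn μ α (single 0 1) = fun θ => (1 / Real.sqrt μ) •
      (WithLp.toLp 2 ![-Real.sin θ - α * Real.cos θ, Real.cos θ - α * Real.sin θ] :
        EuclideanSpace ℝ (Fin 2)) := by
  ext θ i
  fin_cases i <;> simp [prc, rot, quarterTurn_apply]

end QuarterTurn

/-- **The phase resetting curve of the averaged radial isochron clock.**
For `μ > 0`, `η, α ∈ ℝ`, the averaged Cartesian vector field
`F̄(x, y) = (μx − ηy − (x² + y²)(x − αy), μy + ηx − (x² + y²)(y + αx))`, `ω = η − αμ`,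
limit cycle `Φ θ = (√μ cos θ, √μ sin θ)` and
`R θ = (1/√μ)(−sin θ − α cos θ, cos θ − α sin θ)`, we have:
(i) the normalization `⟪R θ, Φ' θ⟫ = 1` for all `θ`; and
(ii) `R` satisfies the adjoint equation `ω • R' θ = −J̄(θ)ᵀ (R θ)`, where `J̄(θ)` is the
Jacobian (Fréchet derivative) of `F̄` at `Φ θ` and `ᵀ` denotes the adjoint. -/
theorem radial_isochron_prc
    (μ η α ω : ℝ) (hμ : 0 < μ) (hω : ω = η - α * μ)
    (Fbar : EuclideanSpace ℝ (Fin 2) → EuclideanSpace ℝ (Fin 2))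
    (hFbar : Fbar = fun v =>
      WithLp.toLp 2 ![μ * v 0 - η * v 1 - (v 0 ^ 2 + v 1 ^ 2) * (v 0 - α * v 1),
        μ * v 1 + η * v 0 - (v 0 ^ 2 + v 1 ^ 2) * (v 1 + α * v 0)])
    (Φ R : ℝ → EuclideanSpace ℝ (Fin 2))
    (hΦ : Φ = fun θ => WithLp.toLp 2 ![Real.sqrt μ * Real.cos θ, Real.sqrt μ * Real.sin θ])
    (hR : R = fun θ => (1 / Real.sqrt μ) •
      (WithLp.toLp 2 ![-Real.sin θ - α * Real.cos θ, Real.cos θ - α * Real.sin θ] :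
        EuclideanSpace ℝ (Fin 2))) :
    (∀ θ : ℝ, ⟪R θ, deriv Φ θ⟫ = 1) ∧
      (∀ θ : ℝ, DifferentiableAt ℝ R θ ∧
        ω • deriv R θ =
          -(ContinuousLinearMap.adjoint (fderiv ℝ Fbar (Φ θ))) (R θ)) := by
  subst hω hFbar hΦ hR
  rw [← radialField_quarterTurn, ← limitCycle_quarterTurn, ← prc_quarterTurn]
  exact radialField_prc inner_quarterTurn_left quarterTurn_quarterTurn hμ (by simp) η α
end

section
/- Let Γ be a finite nonempty set, W : Γ × Γ → ℝ entrywise nonnegative with W_{mm} = 0, λ_m := ∑_k W_{km} > 0 for all m, P_{km} := W_{km}/λ_m, A_{nm} := W_{nm} − δ_{nm}λ_n, and let ρ : Γ → ℝ be nonnegative with ∑_m A_{nm}ρ_m = 0 for all n and Z := ∑_a λ_a ρ_a > 0. Let B be the matrix with entries B_{kq} = λ_k ρ_k / Z (all columns equal), and assume that P^R → B entrywise as R → ∞. Let h : Γ → ℝ satisfy ∑_{q} ρ_q h_q = 0, and set v_q := ρ_q h_q. Then: (i) B v = 0; and (ii) the series ∑_{j=0}^{∞} A·diag(λ)⁻¹·P^j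 · v converges and its sum equals −v; equivalently, for every m ∈ Γ, −∑_{j=0}^{∞} ∑_{p,q∈Γ} A_{mp} λ_p^{−1} (P^j)_{pq} ρ_q h_q = ρ_m h_m. -/
open Matrix

open Filter Topology Finset

/-! Since `A · diag(λ)⁻¹ = P - 1`, the partial sums telescope: `∑_{j<n} (P - 1) P^j v = P^n v - v`,
which tends to `B v - v = -v`. For unconditional convergence, note that the limit `B` of `P^n` is an
idempotent absorbing `P` on both sides, so `(P - B)^n = P^n - B → 0` and
`(P - 1) P^n = (P - 1) (P - B)^n`; powers tending to zero in a Banach algebra eventually contract,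
hence are norm-summable. -/

section TopologicalMonoid

variable {M : Type*} [Monoid M] [TopologicalSpace M] [ContinuousMul M] [T2Space M] {p b : M}

theorem pow_mul_eq_of_tendsto_pow (h : Tendsto (p ^ ·) atTop (𝓝 b)) (k : ℕ) : p ^ k * b = b :=
  tendsto_nhds_unique (h.const_mul (p ^ k)) <| by
    simpa only [← pow_add, add_comm k] using (tendsto_add_atTop_iff_nat k).2 h

theorem mul_pow_eq_of_tendsto_pow (h : Tendsto (p ^ ·) atTop (𝓝 b)) (k : ℕ) : b * p ^ k = b :=
  tendsto_nhds_unique (h.mul_const (p ^ k)) <| by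
    simpa only [← pow_add] using (tendsto_add_atTop_iff_nat k).2 h

theorem isIdempotentElem_of_tendsto_pow (h : Tendsto (p ^ ·) atTop (𝓝 b)) : IsIdempotentElem b :=
  tendsto_nhds_unique (h.mul_const b) <| by
    simpa only [pow_mul_eq_of_tendsto_pow h] using tendsto_const_nhds

end TopologicalMonoid

section TopologicalRing

variable {R : Type*} [Ring R] [TopologicalSpace R] [IsTopologicalRing R] [T2Space R] {p b : R}

theorem sub_pow_succ_of_tendsto_pow (h : Tendsto (p ^ ·) atTop (𝓝 b)) (n : ℕ) :
    (p - b) ^ (n + 1) = p ^ (n + 1) - b := by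
  induction n with
  | zero => rw [zero_add, pow_one, pow_one]
  | succ n ih =>
    have hbp : b * p = b := by simpa only [pow_one] using mul_pow_eq_of_tendsto_pow h 1
    rw [pow_succ, ih, sub_mul, mul_sub, mul_sub, ← pow_succ, pow_mul_eq_of_tendsto_pow h, hbp,
      (isIdempotentElem_of_tendsto_pow h).eq]
    abel

theorem tendsto_sub_pow_of_tendsto_pow (h : Tendsto (p ^ ·) atTop (𝓝 b)) :
    Tendsto ((p - b) ^ ·) atTop (𝓝 0) := by
  rw [← tendsto_add_atTop_iff_nat 1, ← sub_self b]
  simpa only [sub_pow_succ_of_tendsto_pow h] using ((tendsto_add_atTop_iff_nat 1).2 h).sub_const b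

theorem sub_one_mul_pow_eq_of_tendsto_pow (h : Tendsto (p ^ ·) atTop (𝓝 b)) (n : ℕ) :
    (p - 1) * p ^ n = (p - 1) * (p - b) ^ n := by
  cases n with
  | zero => simp only [pow_zero]
  | succ n =>
    have hpb : p * b = b := by simpa only [pow_one] using pow_mul_eq_of_tendsto_pow h 1
    rw [sub_pow_succ_of_tendsto_pow h, mul_sub _ _ b, sub_one_mul p b, hpb, sub_self, sub_zero]

end TopologicalRing

section NormedRing

variable {R : Type*} [NormedRing R]

theorem summable_norm_pow_of_tendsto_pow_zero {a : R} (h : Tendsto (a ^ ·) atTop (𝓝 0)) :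
    Summable (‖a ^ ·‖) := by
  obtain ⟨N, hN, hcontr⟩ : ∃ N, 0 < N ∧ ‖a ^ N‖ < 1 :=
    ((eventually_gt_atTop 0).and
      ((tendsto_zero_iff_norm_tendsto_zero.1 h).eventually (gt_mem_nhds one_pos))).exists
  have hblock : ∀ q r, ‖a ^ (q * N + r)‖ ≤ ‖a ^ N‖ ^ q * ‖a ^ r‖ := by
    intro q r
    induction q with
    | zero => simp
    | succ q ih =>
      calc ‖a ^ ((q + 1) * N + r)‖ = ‖a ^ N * a ^ (q * N + r)‖ := by
            rw [← pow_add]; congr 2; ring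
        _ ≤ ‖a ^ N‖ * ‖a ^ (q * N + r)‖ := norm_mul_le _ _
        _ ≤ ‖a ^ N‖ ^ (q + 1) * ‖a ^ r‖ := by
          rw [pow_succ', mul_assoc]; gcongr
  have : NeZero N := ⟨hN.ne'⟩
  rw [← (Nat.divModEquiv N).symm.summable_iff]
  refine .of_nonneg_of_le (fun _ ↦ norm_nonneg _) (fun qr ↦ hblock qr.1 qr.2) ?_
  exact Summable.mul_of_nonneg (f := fun q : ℕ ↦ ‖a ^ N‖ ^ q)
    (g := fun r : Fin N ↦ ‖a ^ (r : ℕ)‖)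
    (summable_geometric_of_lt_one (norm_nonneg _) hcontr) .of_finite
    (fun _ ↦ pow_nonneg (norm_nonneg _) _) (fun _ ↦ norm_nonneg _)

variable [CompleteSpace R]

theorem hasSum_sub_one_mul_pow_of_tendsto_pow {p b : R} (h : Tendsto (p ^ ·) atTop (𝓝 b)) :
    HasSum (fun n ↦ (p - 1) * p ^ n) (b - 1) := by
  have hsummable : Summable (fun n ↦ (p - 1) * p ^ n) := by
    simp_rw [sub_one_mul_pow_eq_of_tendsto_pow h]
    exact ((summable_norm_pow_of_tendsto_pow_zero
      (tendsto_sub_pow_of_tendsto_pow h)).of_norm).mul_left _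
  rw [hsummable.hasSum_iff_tendsto_nat]
  simpa only [← mul_sum, mul_geom_sum] using h.sub_const 1

end NormedRing

theorem generator_pseudo_inverse_series_general
    (Γ : Type*) [Fintype Γ] [DecidableEq Γ]
    (W : Matrix Γ Γ ℝ)
    (lam : Γ → ℝ) (hlampos : ∀ m, 0 < lam m)
    (P : Matrix Γ Γ ℝ) (hP : ∀ k m, P k m = W k m / lam m)
    (A : Matrix Γ Γ ℝ) (hA : ∀ n m, A n m = W n m - if n = m then lam n else 0)
    (ρ : Γ → ℝ)
    (Z : ℝ)
    (B : Matrix Γ Γ ℝ) (hB : ∀ k q, B k q = lam k * ρ k / Z)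
    (hPF : Filter.Tendsto (fun R : ℕ => P ^ R) Filter.atTop (nhds B))
    (h : Γ → ℝ) (hmean : ∑ q, ρ q * h q = 0)
    (v : Γ → ℝ) (hv : ∀ q, v q = ρ q * h q) :
    B *ᵥ v = 0 ∧
      HasSum (fun j : ℕ =>
        (A * Matrix.diagonal (fun m => (lam m)⁻¹) * P ^ j) *ᵥ v) (-v) := by
  have hBv : B *ᵥ v = 0 := by
    ext k
    simp only [mulVec, dotProduct, hB, hv, ← mul_sum, hmean, mul_zero, Pi.zero_apply]
  have hAD : A * diagonal (fun m => (lam m)⁻¹) = P - 1 := by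
    ext n m
    rw [mul_diagonal, Matrix.sub_apply, Matrix.one_apply, hA, hP, sub_mul, div_eq_mul_inv]
    split_ifs with hnm
    · rw [hnm, mul_inv_cancel₀ (hlampos m).ne']
    · rw [zero_mul]
  -- Any submultiplicative norm inducing the entrywise topology will do.
  let _ := Matrix.linftyOpNormedRing (n := Γ) (α := ℝ)
  let _ := Matrix.linftyOpNormedAlgebra (n := Γ) (R := ℝ) (α := ℝ)
  have : CompleteSpace (Matrix Γ Γ ℝ) := FiniteDimensional.complete ℝ _
  have hsum : HasSum (fun j ↦ ((P - 1) * P ^ j) *ᵥ v) ((B - 1) *ᵥ v) :=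
    (hasSum_sub_one_mul_pow_of_tendsto_pow hPF).map
      (mulVec.addMonoidHomLeft v) (continuous_id.matrix_mulVec continuous_const)
  rw [sub_mulVec, hBv, one_mulVec, zero_sub, ← hAD] at hsum
  exact ⟨hBv, hsum⟩

/-- **Pseudo-inverse identity for the generator acting on mean-zero vectors.**
Let `W` be an entrywise nonnegative matrix on a finite nonempty set `Γ` with zero diagonal,
positive escape rates `λ_m = ∑_k W_{km}`, jump matrix `P_{km} = W_{km}/λ_m`, generator
`A_{nm} = W_{nm} − δ_{nm} λ_n`, and stationary vector `ρ ≥ 0` (`∑_m A_{nm} ρ_m = 0`) with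
`Z = ∑_a λ_a ρ_a > 0`. Let `B` be the rank-one matrix with `B_{kq} = λ_k ρ_k / Z`, and assume
`P^R → B` as `R → ∞`. If `h : Γ → ℝ` satisfies `∑_q ρ_q h_q = 0` and `v_q = ρ_q h_q`, then
(i) `B v = 0`, and (ii) the series `∑_{j=0}^∞ A·diag(λ)⁻¹·P^j · v` converges with sum `−v`. -/
theorem generator_pseudo_inverse_series
    (Γ : Type*) [Fintype Γ] [DecidableEq Γ] [Nonempty Γ]
    (W : Matrix Γ Γ ℝ) (hW : ∀ k m, 0 ≤ W k m) (hWdiag : ∀ m, W m m = 0)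
    (lam : Γ → ℝ) (hlam : ∀ m, lam m = ∑ k, W k m) (hlampos : ∀ m, 0 < lam m)
    (P : Matrix Γ Γ ℝ) (hP : ∀ k m, P k m = W k m / lam m)
    (A : Matrix Γ Γ ℝ) (hA : ∀ n m, A n m = W n m - if n = m then lam n else 0)
    (ρ : Γ → ℝ) (hρ : ∀ m, 0 ≤ ρ m) (hstat : ∀ n, ∑ m, A n m * ρ m = 0)
    (Z : ℝ) (hZ : Z = ∑ a, lam a * ρ a) (hZpos : 0 < Z)
    (B : Matrix Γ Γ ℝ) (hB : ∀ k q, B k q = lam k * ρ k / Z)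
    (hPF : Filter.Tendsto (fun R : ℕ => P ^ R) Filter.atTop (nhds B))
    (h : Γ → ℝ) (hmean : ∑ q, ρ q * h q = 0)
    (v : Γ → ℝ) (hv : ∀ q, v q = ρ q * h q) :
    B *ᵥ v = 0 ∧
      HasSum (fun j : ℕ =>
        (A * Matrix.diagonal (fun m => (lam m)⁻¹) * P ^ j) *ᵥ v) (-v) :=
  generator_pseudo_inverse_series_general Γ W lam hlampos P hP A hA ρ Z B hB hPF h hmean v hv
end
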